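/- arXiv:math/0104281 — 5 statements merged into one kernel-verified Lean document; each statement's English description precedes it below -/
import Mathlib

section
/- Let $A \in V_0 \otimes \cdots \otimes V_p$ be a multidimensional matrix, viewed as a linear map $A: V_1^\vee \otimes \cdots \otimes V_p^\vee \to V_0$. If for the induced map $\partial_A : V_0^\vee \otimes S^{m_1}V_1 \otimes \cdots \otimes S^{m_p}V_p \to S^{m_1+1}V_1 \otimes \cdots \otimes S^{m_p+1}V_p$ there exist nonzero $v_i \in V_i^\vee$ ($i=1,\dots,p$) with $A(v_1 \otimes \cdots \otimes v_p) = 0$, then the transpose $(\partial_A)^t$ kills the nonzero vector $v_1^{\otimes m_1+1} \otimes \cdots \otimes v_p^{\otimes m_p+1}$; hence if $A$ is degenerate then $\det \partial_A = 0$. -/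
open scoped BigOperators Classical

/-- The matrix of the map
`∂_A : V₀^∨ ⊗ S^{m₁}V₁ ⊗ ⋯ ⊗ S^{m_p}V_p → S^{m₁+1}V₁ ⊗ ⋯ ⊗ S^{m_p+1}V_p`
in the monomial bases (bases of symmetric powers of `ℂ^{n i}` are indexed by
`Sym (Fin (n i)) m`): `∂_A(ε_{i₀} ⊗ x^c) = ∑_j a_{i₀ j} x^{c + e_j}`, i.e. multiply by
the image of `ε_{i₀}` under `Aᵗ : V₀^∨ → V₁ ⊗ ⋯ ⊗ V_p` using symmetric multiplication
in each factor. -/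
noncomputable def delM {n₀ : ℕ} {ι : Type} [Fintype ι]
    (n : ι → ℕ) (m : ι → ℕ) (a : Fin n₀ → ((i : ι) → Fin (n i)) → ℂ) :
    Matrix ((i : ι) → Sym (Fin (n i)) (m i + 1))
      (Fin n₀ × ((i : ι) → Sym (Fin (n i)) (m i))) ℂ :=
  fun d x => ∑ j : (i : ι) → Fin (n i),
    if (∀ i, d i = j i ::ₛ x.2 i) then a x.1 j else 0

/-!
Pairing with `v₁^{m₁+1} ⊗ ⋯ ⊗ v_p^{m_p+1}` is evaluation of multihomogeneous polynomials at the
point `(v₁, …, v_p)`, which is multiplicative. Hence `(∂_A)ᵗ` sends it to the form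
`ξ ⊗ f ↦ f(v) · (Aᵗξ)(v) = f(v) · ξ(A(v₁ ⊗ ⋯ ⊗ v_p)) = 0`, and a nonzero kernel vector of the
transpose forces the determinant to vanish.
-/

open Matrix

theorem Matrix.det_submatrix_eq_zero_of_transpose_mulVec_eq_zero
    {K : Type*} [Field K] {r c : Type*} [Fintype r] [Fintype c] [DecidableEq c]
    {M : Matrix r c K} {u : r → K} (hu : u ≠ 0) (hMu : Mᵀ *ᵥ u = 0) (e : c ≃ r) :
    (M.submatrix e id).det = 0 := by
  rw [← Matrix.exists_vecMul_eq_zero_iff]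
  have hu_e : (u ∘ e) ∘ e.symm = u := by
    rw [Function.comp_assoc, Equiv.self_comp_symm, Function.comp_id]
  refine ⟨u ∘ e, fun h => hu ?_, ?_⟩
  · rw [← hu_e, h, Pi.zero_comp]
  · rw [Matrix.submatrix_vecMul_equiv, hu_e, ← Matrix.mulVec_transpose, hMu, Pi.zero_comp]

section PureSymPower

variable {ι R : Type*} [Fintype ι] [CommMonoidWithZero R] {α : ι → Type*}

/-- Coordinates of `v₁^{m₁} ⊗ ⋯ ⊗ v_p^{m_p}` in the monomial basis of
`S^{m₁}V₁ ⊗ ⋯ ⊗ S^{m_p}V_p`, where `vᵢ` is given by its values on the basis `α i` of `Vᵢ`. -/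
def pureSymPower (v : (i : ι) → α i → R) (m : ι → ℕ) : ((i : ι) → Sym (α i) (m i)) → R :=
  fun d => ∏ i, ((d i : Multiset (α i)).map (v i)).prod

theorem pureSymPower_cons (v : (i : ι) → α i → R) (m : ι → ℕ) (j : (i : ι) → α i)
    (c : (i : ι) → Sym (α i) (m i)) :
    pureSymPower v (fun i => m i + 1) (fun i => j i ::ₛ c i) =
      (∏ i, v i (j i)) * pureSymPower v m c := by
  simp only [pureSymPower, Sym.coe_cons, Multiset.map_cons, Multiset.prod_cons,
    Finset.prod_mul_distrib]

theorem pureSymPower_ne_zero [NoZeroDivisors R] [Nontrivial R] {v : (i : ι) → α i → R}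
    (hv : ∀ i, v i ≠ 0) (m : ι → ℕ) : pureSymPower v m ≠ 0 := by
  choose j hj using fun i => Function.ne_iff.mp (hv i)
  refine Function.ne_iff.mpr ⟨fun i => Sym.replicate (m i) (j i), ?_⟩
  simpa [pureSymPower, Sym.replicate, Finset.prod_ne_zero_iff] using fun i h => absurd h (hj i)

end PureSymPower

theorem delM_transpose_mulVec_apply {n₀ : ℕ} {ι : Type} [Fintype ι] [DecidableEq ι]
    (n m : ι → ℕ)
    (a : Fin n₀ → ((i : ι) → Fin (n i)) → ℂ) (u : ((i : ι) → Sym (Fin (n i)) (m i + 1)) → ℂ)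
    (i₀ : Fin n₀) (c : (i : ι) → Sym (Fin (n i)) (m i)) :
    ((delM n m a)ᵀ *ᵥ u) (i₀, c) = ∑ j : (i : ι) → Fin (n i), a i₀ j * u (fun i => j i ::ₛ c i) := by
  simp only [Matrix.mulVec, dotProduct, Matrix.transpose_apply, delM, Finset.sum_mul]
  rw [Finset.sum_comm]
  refine Finset.sum_congr (by congr!) fun j _ => ?_
  rw [Fintype.sum_eq_single (fun i => j i ::ₛ c i) fun d hd => ?_]
  · simp
  · rw [if_neg fun h => hd (funext h), zero_mul]

theorem delM_transpose_mulVec_pureSymPower {n₀ : ℕ} {ι : Type} [Fintype ι] [DecidableEq ι]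
    (n m : ι → ℕ)
    (a : Fin n₀ → ((i : ι) → Fin (n i)) → ℂ) (v : (i : ι) → Fin (n i) → ℂ)
    (hker : ∀ i₀, ∑ j : (i : ι) → Fin (n i), a i₀ j * ∏ i, v i (j i) = 0) :
    (delM n m a)ᵀ *ᵥ pureSymPower v (fun i => m i + 1) = 0 := by
  funext ⟨i₀, c⟩
  rw [delM_transpose_mulVec_apply]
  simp only [pureSymPower_cons, ← mul_assoc, ← Finset.sum_mul, hker, zero_mul, Pi.zero_apply]

theorem stmt_2_general (p : ℕ) (k : ℕ → ℕ)
    (n : Fin p → ℕ)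
    (m : Fin p → ℕ)
    (a : Fin (k 0 + 1) → ((i : Fin p) → Fin (n i)) → ℂ)
    (v : (i : Fin p) → Fin (n i) → ℂ) (hv : ∀ i, v i ≠ 0)
    (hker : ∀ i₀ : Fin (k 0 + 1),
      ∑ j : (i : Fin p) → Fin (n i), a i₀ j * ∏ i, v i (j i) = 0)
    (u : ((i : Fin p) → Sym (Fin (n i)) (m i + 1)) → ℂ)
    (hu : u = fun d => ∏ i, ((d i).1.map (v i)).prod) :
    u ≠ 0 ∧
    (delM n m a).transpose.mulVec u = 0 ∧
    ∀ e : (Fin (k 0 + 1) × ((i : Fin p) → Sym (Fin (n i)) (m i))) ≃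
        ((i : Fin p) → Sym (Fin (n i)) (m i + 1)),
      ((delM n m a).submatrix e id).det = 0 := by
  have hu0 : u ≠ 0 := hu ▸ pureSymPower_ne_zero hv _
  have hkill : (delM n m a)ᵀ *ᵥ u = 0 := hu ▸ delM_transpose_mulVec_pureSymPower n m a v hker
  exact ⟨hu0, hkill, Matrix.det_submatrix_eq_zero_of_transpose_mulVec_eq_zero hu0 hkill⟩

/-- boundary format, `m_j = ∑_{i<j} kᵢ`.  If there are nonzero
`vᵢ ∈ Vᵢ^∨` with `A(v₁ ⊗ ⋯ ⊗ v_p) = 0`, then the transpose of `∂_A` kills the nonzero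
vector `v₁^{⊗ m₁+1} ⊗ ⋯ ⊗ v_p^{⊗ m_p+1}` (whose coordinate at a monomial basis vector
`d` is `∏ᵢ ∏_{r ∈ dᵢ} vᵢ(r)`); hence `det ∂_A = 0` (the determinant being computed
after identifying source and target by any linear identification of the bases). -/
theorem stmt_2 (p : ℕ) (hp : 1 ≤ p) (k : ℕ → ℕ)
    (hk : k 0 = ∑ i ∈ Finset.range p, k (i + 1))
    (n : Fin p → ℕ) (hn : ∀ i : Fin p, n i = k (i.val + 1) + 1)
    (m : Fin p → ℕ) (hm : ∀ i : Fin p, m i = ∑ i' ∈ Finset.range i.val, k (i' + 1))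
    (a : Fin (k 0 + 1) → ((i : Fin p) → Fin (n i)) → ℂ)
    (v : (i : Fin p) → Fin (n i) → ℂ) (hv : ∀ i, v i ≠ 0)
    (hker : ∀ i₀ : Fin (k 0 + 1),
      ∑ j : (i : Fin p) → Fin (n i), a i₀ j * ∏ i, v i (j i) = 0)
    (u : ((i : Fin p) → Sym (Fin (n i)) (m i + 1)) → ℂ)
    (hu : u = fun d => ∏ i, ((d i).1.map (v i)).prod) :
    u ≠ 0 ∧
    (delM n m a).transpose.mulVec u = 0 ∧
    ∀ e : (Fin (k 0 + 1) × ((i : Fin p) → Sym (Fin (n i)) (m i))) ≃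
        ((i : Fin p) → Sym (Fin (n i)) (m i + 1)),
      ((delM n m a).submatrix e id).det = 0 :=
  stmt_2_general p k n m a v hv hker u hu
end

section
/- If $B \in W_0 \otimes \cdots \otimes W_q$ is degenerate, then the convolution $A \ast B$ is degenerate for any $A$ with $V_p = W_0^\vee$. -/
open scoped BigOperators

/-- Degeneracy of a multidimensional matrix in coordinates: there are nonzero vectors
`vᵢ` (one for each factor besides the zeroth) with `A(v₁ ⊗ ⋯ ⊗ v_p) = 0`. -/
def Degenerate {n₀ : ℕ} {ι : Type} [Fintype ι] [DecidableEq ι]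
    (n : ι → ℕ) (a : Fin n₀ → ((i : ι) → Fin (n i)) → ℂ) : Prop :=
  ∃ v : (i : ι) → (Fin (n i) → ℂ), (∀ i, v i ≠ 0) ∧
    ∀ i₀ : Fin n₀, ∑ j : (i : ι) → Fin (n i), a i₀ j * ∏ i, v i (j i) = 0

/-- if `B` is degenerate then the convolution `A ∗ B` (contracting the
last index of `A`, of size `k_p + 1 = l₀ + 1`, with the first index of `B`) is
degenerate, for any `A`.  Here `A` has factors `V₁,…,V_{p-1}` (indexed by `Fin p'`)
and a last factor `V_p = W₀^∨`, and `B` has factors `W₁,…,W_q` (indexed by `Fin q`). -/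
theorem stmt_5 (p' q k₀ kp : ℕ)
    (kA : Fin p' → ℕ) (lB : Fin q → ℕ)
    (a : Fin (k₀ + 1) → ((i : Fin p') → Fin (kA i + 1)) → Fin (kp + 1) → ℂ)
    (b : Fin (kp + 1) → ((t : Fin q) → Fin (lB t + 1)) → ℂ)
    (hB : Degenerate (fun t => lB t + 1) b) :
    Degenerate (ι := Fin p' ⊕ Fin q)
      (Sum.elim (fun i => kA i + 1) (fun t => lB t + 1))
      (fun i₀ j => ∑ h : Fin (kp + 1),
        a i₀ (fun i => j (Sum.inl i)) h * b h (fun t => j (Sum.inr t))) := by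
  obtain ⟨w, hw, hsum⟩ := hB
  refine ⟨Sum.rec (fun _ _ => 1) w, ?_, ?_⟩
  · rintro (i | t)
    · exact fun h => one_ne_zero (congrFun h ⟨0, Nat.succ_pos _⟩)
    · exact hw t
  · intro i₀
    rw [← Equiv.sum_comp (Equiv.sumPiEquivProdPi
        (fun i => Fin (Sum.elim (fun i => kA i + 1) (fun t => lB t + 1) i))).symm]
    rw [Fintype.sum_prod_type]
    have key : ∀ (j1 : (i : Fin p') → Fin (kA i + 1)),
        ∑ j2 : (t : Fin q) → Fin (lB t + 1),
          (∑ h, a i₀ j1 h * b h j2) * ∏ t, w t (j2 t) = 0 := by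
      intro j1
      simp only [Finset.sum_mul]
      rw [Finset.sum_comm]
      simp only [mul_assoc, ← Finset.mul_sum]
      simp [hsum]
    simp only [Equiv.sumPiEquivProdPi_symm_apply, Fintype.prod_sum_type,
      Finset.prod_const_one, one_mul]
    exact Finset.sum_eq_zero fun j1 _ => key j1
end

section
/- For a finite-dimensional vector space $A$ of dimension $a$ and an endomorphism $f$ of $A$, the induced endomorphism $S^k f$ of the symmetric power $S^k A$ satisfies $\det(S^k f) = (\det f)^{\binom{a+k-1}{a}}$. -/
open scoped BigOperators

/-- The monomial multi-index attached to an element of `Sym (Fin a) k`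
(the monomial basis of the `k`-th symmetric power of `ℂ^a`). -/
noncomputable def symExp {a k : ℕ} (s : Sym (Fin a) k) : Fin a →₀ ℕ := Multiset.toFinsupp s.1

/-- The matrix (in the monomial basis of `S^k(ℂ^a)`) of the `k`-th symmetric power of
the endomorphism of `ℂ^a` given by the matrix `M`: symmetric powers are realized as
homogeneous polynomials of degree `k`, and `S^k M` acts by the linear substitution
`Xᵢ ↦ ∑ⱼ Mᵢⱼ Xⱼ`. -/
noncomputable def symPowMatrix (a k : ℕ) (M : Matrix (Fin a) (Fin a) ℂ) :
    Matrix (Sym (Fin a) k) (Sym (Fin a) k) ℂ := fun d c =>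
  MvPolynomial.coeff (symExp d)
    ((MvPolynomial.aeval fun i : Fin a => ∑ j : Fin a, M i j • (MvPolynomial.X j :
        MvPolynomial (Fin a) ℂ)) (MvPolynomial.monomial (symExp c) 1))

/-!
Realise `S^k M` as the action of the linear substitution `Xᵢ ↦ ∑ⱼ Mᵢⱼ Xⱼ` on homogeneous
polynomials of degree `k`. Substitutions compose, so `M ↦ det (S^k M)` is multiplicative and it
suffices to treat diagonal matrices and transvections, which generate all matrices.
A diagonal matrix `D` acts diagonally on monomials, and by symmetry each variable occurs
`binom(a+k-1, a)` times in total among the monomials of degree `k`.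
For transvections, `φ c = det (S^k T(c))` satisfies `φ (c + d) = φ c * φ d`, and conjugation by a
diagonal matrix shows that `φ` is constant on `c ≠ 0`; then `φ 1 ^ 2 = φ 2 = φ 1` and
`φ 1 * φ (-1) = φ 0 = 1` force `φ = 1`.
-/

theorem Nat.mul_add_sub_one_choose_eq (n k : ℕ) :
    k * (n + k - 1).choose k = n * (n + k - 1).choose n := by
  rcases k with _ | m
  · cases n <;> simp
  · rw [show n + (m + 1) - 1 = n + m by omega, mul_comm, Nat.choose_succ_right_eq,
      Nat.add_sub_cancel, Nat.choose_symm_add, mul_comm]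

theorem Sym.sum_count_eq_choose {α : Type*} [Fintype α] [DecidableEq α] (k : ℕ) (i : α) :
    ∑ s : Sym α k, (s : Multiset α).count i =
      (Fintype.card α + k - 1).choose (Fintype.card α) := by
  have hsymm (j : α) : ∑ s : Sym α k, (s : Multiset α).count j =
      ∑ s : Sym α k, (s : Multiset α).count i :=
    Fintype.sum_equiv (Sym.equivCongr (Equiv.swap i j)) _ _ fun s => by
      simpa using (Multiset.count_map_eq_count' _ _ (Equiv.swap i j).injective j).symm
  have htotal : Fintype.card α * ∑ s : Sym α k, (s : Multiset α).count i =
      k * (Fintype.card α + k - 1).choose k := by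
    calc Fintype.card α * ∑ s : Sym α k, (s : Multiset α).count i
        = ∑ j : α, ∑ s : Sym α k, (s : Multiset α).count j := by simp [hsymm]
      _ = ∑ s : Sym α k, ∑ j : α, (s : Multiset α).count j := Finset.sum_comm
      _ = k * (Fintype.card α + k - 1).choose k := by
        simp [Multiset.sum_count_eq_card, Sym.card_sym_eq_choose, mul_comm]
  rw [Nat.mul_add_sub_one_choose_eq] at htotal
  exact Nat.eq_of_mul_eq_mul_left (Fintype.card_pos_iff.2 ⟨i⟩) htotal

open MvPolynomial Matrix

theorem diagonal_mul_transvection_mul_diagonal {n K : Type*} [Fintype n] [DecidableEq n]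
    [Field K] {i j : n} (hij : i ≠ j) {c : K} (hc : c ≠ 0) :
    diagonal (Function.update 1 i c) * transvection i j 1 * diagonal (Function.update 1 i c⁻¹) =
      transvection i j c := by
  ext x y
  simp only [mul_diagonal, diagonal_mul, transvection, Matrix.add_apply, one_apply, single_apply,
    Function.update_apply, Pi.one_apply]
  split_ifs <;> subst_vars <;> simp_all

section LinSubst

variable {R σ : Type*} [CommSemiring R] [Fintype σ]

noncomputable def linSubst (M : Matrix σ σ R) : MvPolynomial σ R →ₐ[R] MvPolynomial σ R :=
  aeval fun i => ∑ j, M i j • X j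

theorem linSubst_X (M : Matrix σ σ R) (i : σ) : linSubst M (X i) = ∑ j, M i j • X j :=
  aeval_X _ _

theorem linSubst_mul (M N : Matrix σ σ R) :
    linSubst (N * M) = (linSubst M).comp (linSubst N) := by
  refine algHom_ext fun i => ?_
  simp only [linSubst_X, AlgHom.comp_apply, map_sum, map_smul, Finset.smul_sum, smul_smul,
    mul_apply, Finset.sum_smul]
  exact Finset.sum_comm

theorem isHomogeneous_linSubst {p : MvPolynomial σ R} {n : ℕ} (hp : p.IsHomogeneous n)
    (M : Matrix σ σ R) : (linSubst M p).IsHomogeneous n := by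
  simpa only [linSubst, one_mul] using hp.aeval _ fun i =>
    (homogeneousSubmodule σ R 1).sum_mem fun j _ =>
      (homogeneousSubmodule σ R 1).smul_mem (M i j) (isHomogeneous_X R j)

theorem linSubst_diagonal_monomial [DecidableEq σ] (D : σ → R) (e : σ →₀ ℕ) (r : R) :
    linSubst (diagonal D) (monomial e r) = monomial e (r * e.prod fun i n => D i ^ n) := by
  have hX (i : σ) : ∑ j, diagonal D i j • (X j : MvPolynomial σ R) = C (D i) * X i := by
    simp [diagonal_apply, smul_eq_C_mul]
  simp only [linSubst, hX, aeval_monomial, mul_pow, ← map_pow, Finsupp.prod_mul]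
  rw [monomial_eq, ← map_finsuppProd, algebraMap_eq, ← mul_assoc, ← map_mul]

end LinSubst

section SymPow

variable {a k : ℕ}

theorem symExp_injective : Function.Injective (symExp : Sym (Fin a) k → Fin a →₀ ℕ) :=
  fun _ _ h => Subtype.ext (Multiset.toFinsupp.injective h)

theorem symExp_apply (s : Sym (Fin a) k) (i : Fin a) :
    symExp s i = (s : Multiset (Fin a)).count i :=
  Multiset.toFinsupp_apply _ _

theorem degree_symExp (s : Sym (Fin a) k) : (symExp s).degree = k := by
  rw [Finsupp.degree_eq_sum]
  simp [symExp_apply, Multiset.sum_count_eq_card]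

theorem exists_symExp_eq {e : Fin a →₀ ℕ} (he : e.degree = k) :
    ∃ s : Sym (Fin a) k, symExp s = e :=
  ⟨(Sym.equivNatSum (Fin a) k).symm ⟨e, by simpa [Finsupp.degree_apply, Finsupp.sum] using he⟩,
    congrArg Subtype.val ((Sym.equivNatSum (Fin a) k).apply_symm_apply _)⟩

theorem MvPolynomial.IsHomogeneous.sum_monomial_symExp {R : Type*} [CommSemiring R]
    {p : MvPolynomial (Fin a) R} (hp : p.IsHomogeneous k) :
    ∑ s : Sym (Fin a) k, monomial (symExp s) (coeff (symExp s) p) = p := by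
  classical
  have hsupp : p.support ⊆ Finset.univ.image symExp := fun e he => by
    have hdeg : e.degree = k := by
      rw [Finsupp.degree_eq_weight_one]; exact hp (mem_support_iff.1 he)
    obtain ⟨s, rfl⟩ := exists_symExp_eq hdeg
    exact Finset.mem_image_of_mem _ (Finset.mem_univ s)
  conv_rhs => rw [p.as_sum, Finset.sum_subset hsupp fun e _ he => by
    rw [notMem_support_iff.1 he, monomial_zero]]
  rw [Finset.sum_image fun s _ t _ h => symExp_injective h]

-- `symPowMatrix` substitutes into a monomial with coefficients in `ℕ`, not `ℂ`.
theorem symPowMatrix_apply (M : Matrix (Fin a) (Fin a) ℂ) (d c : Sym (Fin a) k) :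
    symPowMatrix a k M d c = coeff (symExp d) (linSubst M (monomial (symExp c) 1)) := by
  simp only [symPowMatrix, linSubst, aeval_monomial, map_one]

theorem symPowMatrix_mul (M N : Matrix (Fin a) (Fin a) ℂ) :
    symPowMatrix a k (N * M) = symPowMatrix a k M * symPowMatrix a k N := by
  ext d c
  have hp := isHomogeneous_linSubst (isHomogeneous_monomial (1 : ℂ) (degree_symExp c)) N
  rw [symPowMatrix_apply, linSubst_mul, AlgHom.comp_apply, ← hp.sum_monomial_symExp, map_sum,
    coeff_sum, mul_apply]
  refine Finset.sum_congr rfl fun s _ => ?_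
  rw [symPowMatrix_apply, symPowMatrix_apply, mul_comm, ← smul_eq_mul, ← coeff_smul, ← map_smul,
    smul_monomial, smul_eq_mul, mul_one]

theorem symPowMatrix_diagonal (D : Fin a → ℂ) :
    symPowMatrix a k (diagonal D) = diagonal fun c => (symExp c).prod fun i n => D i ^ n := by
  ext d c
  rw [symPowMatrix_apply, linSubst_diagonal_monomial, coeff_monomial, diagonal_apply, one_mul]
  by_cases h : d = c <;> simp [h, symExp_injective.eq_iff, eq_comm]

theorem symPowMatrix_one : symPowMatrix a k (1 : Matrix (Fin a) (Fin a) ℂ) = 1 := by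
  rw [← diagonal_one, symPowMatrix_diagonal]
  simp

theorem det_symPowMatrix_mul (M N : Matrix (Fin a) (Fin a) ℂ) :
    (symPowMatrix a k (M * N)).det = (symPowMatrix a k M).det * (symPowMatrix a k N).det := by
  rw [symPowMatrix_mul, det_mul, mul_comm]

theorem det_symPowMatrix_diagonal (D : Fin a → ℂ) :
    (symPowMatrix a k (diagonal D)).det = (diagonal D).det ^ (a + k - 1).choose a := by
  simp only [symPowMatrix_diagonal, det_diagonal, Finsupp.prod_fintype _ _ (fun _ => pow_zero _),
    symExp_apply]
  rw [Finset.prod_comm, ← Finset.prod_pow]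
  refine Finset.prod_congr rfl fun i _ => ?_
  rw [Finset.prod_pow_eq_pow_sum, Sym.sum_count_eq_choose, Fintype.card_fin]

theorem det_symPowMatrix_transvection {i j : Fin a} (hij : i ≠ j) (c : ℂ) :
    (symPowMatrix a k (transvection i j c)).det = 1 := by
  set φ : ℂ → ℂ := fun c => (symPowMatrix a k (transvection i j c)).det
  have hadd (c d : ℂ) : φ (c + d) = φ c * φ d := by
    simp only [φ, ← transvection_mul_transvection_same (h := hij), det_symPowMatrix_mul]
  have hzero : φ 0 = 1 := by
    simp only [φ, transvection_zero, symPowMatrix_one, det_one]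
  have hconst (c : ℂ) (hc : c ≠ 0) : φ c = φ 1 := by
    have hD : diagonal (Function.update 1 i c) * diagonal (Function.update 1 i c⁻¹) = 1 := by
      rw [diagonal_mul_diagonal, ← diagonal_one]
      congr 1
      ext x
      rcases eq_or_ne x i with rfl | hx <;> simp [*]
    calc φ c = (symPowMatrix a k (diagonal (Function.update 1 i c) *
          diagonal (Function.update 1 i c⁻¹))).det * φ 1 := by
          simp only [φ, ← diagonal_mul_transvection_mul_diagonal hij hc, det_symPowMatrix_mul]
          ring
      _ = φ 1 := by rw [hD, symPowMatrix_one, det_one, one_mul]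
  have hunit : φ 1 ≠ 0 := fun h => by
    simpa [h, hzero] using hadd 1 (-1)
  have hone : φ 1 = 1 := by
    have h := hadd 1 1
    rw [one_add_one_eq_two, hconst 2 two_ne_zero] at h
    exact (mul_eq_left₀ hunit).1 h.symm
  rcases eq_or_ne c 0 with rfl | hc
  · exact hzero
  · exact (hconst c hc).trans hone

end SymPow

/-- for an endomorphism `f` of an `a`-dimensional space, the induced
endomorphism `S^k f` of the `k`-th symmetric power satisfies
`det (S^k f) = (det f)^{binom(a+k-1, a)}`. -/
theorem stmt_8 (a k : ℕ) (M : Matrix (Fin a) (Fin a) ℂ) :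
    (symPowMatrix a k M).det = M.det ^ Nat.choose (a + k - 1) a := by
  induction M using diagonal_transvection_induction with
  | hdiag D _ => exact det_symPowMatrix_diagonal D
  | htransvec t =>
    rw [TransvectionStruct.toMatrix, det_symPowMatrix_transvection t.hij,
      det_transvection_of_ne (h := t.hij), one_pow]
  | hmul A B hA hB => rw [det_symPowMatrix_mul, hA, hB, det_mul, mul_pow]
end

section
/- Degree formula: the hyperdeterminant $\mathrm{Det}(A) = \det \partial_A$ of a boundary format matrix of format $(k_0+1)\times\cdots\times(k_p+1)$ (with $k_0 = \sum_{i=1}^p k_i$) is a homogeneous polynomial of degree $N_A = \binom{k_0+1}{k_1,\dots,k_p} = \frac{(k_0+1)!}{k_1!\cdots k_p!}$ in the entries of $A$: for any scalar $t$, $\mathrm{Det}(tA) = t^{N_A}\,\mathrm{Det}(A)$. -/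
open scoped BigOperators Classical

open Finset Nat in
theorem factorial_mul_prod_factorial_mul_prod_choose (s : ℕ) (c : ℕ → ℕ) (p : ℕ) :
    s ! * (∏ j ∈ range p, (c j)!) *
        ∏ j ∈ range p, (s + ∑ i ∈ range j, c i + c j).choose (c j)
      = (s + ∑ j ∈ range p, c j)! := by
  induction p with
  | zero => simp
  | succ p ih =>
    rw [prod_range_succ, prod_range_succ, sum_range_succ, ← add_assoc,
      ← add_choose_mul_factorial_mul_factorial, ← ih]
    ring

theorem delM_mul_left {n₀ : ℕ} {ι : Type} [Fintype ι] (n m : ι → ℕ)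
    (a : Fin n₀ → ((i : ι) → Fin (n i)) → ℂ) (t : ℂ) :
    delM n m (fun i₀ j => t * a i₀ j) = t • delM n m a := by
  ext d x
  simp only [delM, Matrix.smul_apply, smul_eq_mul, Finset.mul_sum, mul_ite, mul_zero]

theorem det_submatrix_delM_mul_left {n₀ : ℕ} {ι : Type} [Fintype ι] [DecidableEq ι] (n m : ι → ℕ)
    (a : Fin n₀ → ((i : ι) → Fin (n i)) → ℂ) (t : ℂ)
    (e : (Fin n₀ × ((i : ι) → Sym (Fin (n i)) (m i))) ≃ ((i : ι) → Sym (Fin (n i)) (m i + 1))) :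
    ((delM n m (fun i₀ j => t * a i₀ j)).submatrix e id).det
      = t ^ Fintype.card ((i : ι) → Sym (Fin (n i)) (m i + 1))
        * ((delM n m a).submatrix e id).det := by
  rw [delM_mul_left, ← Fintype.card_congr e, ← Matrix.det_smul]
  rfl

open Finset Nat in
theorem card_pi_sym_boundary_format (p : ℕ) (k : ℕ → ℕ)
    (hk : k 0 = ∑ i ∈ range p, k (i + 1))
    (n : Fin p → ℕ) (hn : ∀ i : Fin p, n i = k (i.val + 1) + 1)
    (m : Fin p → ℕ) (hm : ∀ i : Fin p, m i = ∑ i' ∈ range i.val, k (i' + 1)) :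
    Fintype.card ((i : Fin p) → Sym (Fin (n i)) (m i + 1))
      = (k 0 + 1)! / ∏ i ∈ range p, (k (i + 1))! := by
  have hterm : ∀ i : Fin p, Fintype.card (Sym (Fin (n i)) (m i + 1))
      = (1 + ∑ i' ∈ range i.val, k (i' + 1) + k (i.val + 1)).choose (k (i.val + 1)) := by
    intro i
    rw [Sym.card_sym_eq_choose, Fintype.card_fin, hn i, hm i,
      show k (i.val + 1) + 1 + (∑ i' ∈ range i.val, k (i' + 1) + 1) - 1
        = 1 + ∑ i' ∈ range i.val, k (i' + 1) + k (i.val + 1) by omega]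
    exact Nat.choose_symm_of_eq_add (by omega)
  rw [Fintype.card_pi, Fintype.prod_congr _ _ hterm,
    Fin.prod_univ_eq_prod_range (fun j =>
      (1 + ∑ i' ∈ range j, k (i' + 1) + k (j + 1)).choose (k (j + 1))),
    hk, add_comm _ 1, ← factorial_mul_prod_factorial_mul_prod_choose 1 (fun j => k (j + 1)),
    factorial_one, one_mul, Nat.mul_div_cancel_left _ (prod_pos fun i _ => factorial_pos _)]

theorem stmt_16_general (p : ℕ) (k : ℕ → ℕ)
    (hk : k 0 = ∑ i ∈ Finset.range p, k (i + 1))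
    (n : Fin p → ℕ) (hn : ∀ i : Fin p, n i = k (i.val + 1) + 1)
    (m : Fin p → ℕ) (hm : ∀ i : Fin p, m i = ∑ i' ∈ Finset.range i.val, k (i' + 1))
    (a : Fin (k 0 + 1) → ((i : Fin p) → Fin (n i)) → ℂ) (t : ℂ) :
    ∀ e : (Fin (k 0 + 1) × ((i : Fin p) → Sym (Fin (n i)) (m i))) ≃
        ((i : Fin p) → Sym (Fin (n i)) (m i + 1)),
      ((delM n m (fun i₀ j => t * a i₀ j)).submatrix e id).det
        = t ^ ((k 0 + 1).factorial / ∏ i ∈ Finset.range p, (k (i + 1)).factorial)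
          * ((delM n m a).submatrix e id).det := by
  intro e
  rw [det_submatrix_delM_mul_left, card_pi_sym_boundary_format p k hk n hn m hm]

/-- the hyperdeterminant `Det(A) = det ∂_A` of a boundary format matrix
is homogeneous of degree `N_A = (k₀+1)!/(k₁! ⋯ k_p!)` in the entries of `A`:
`Det(tA) = t^{N_A} Det(A)` (in any fixed identification `e` of the bases of source and
target of `∂_A`). -/
theorem stmt_16 (p : ℕ) (hp : 1 ≤ p) (k : ℕ → ℕ)
    (hk : k 0 = ∑ i ∈ Finset.range p, k (i + 1))
    (n : Fin p → ℕ) (hn : ∀ i : Fin p, n i = k (i.val + 1) + 1)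
    (m : Fin p → ℕ) (hm : ∀ i : Fin p, m i = ∑ i' ∈ Finset.range i.val, k (i' + 1))
    (a : Fin (k 0 + 1) → ((i : Fin p) → Fin (n i)) → ℂ) (t : ℂ) :
    ∀ e : (Fin (k 0 + 1) × ((i : Fin p) → Sym (Fin (n i)) (m i))) ≃
        ((i : Fin p) → Sym (Fin (n i)) (m i + 1)),
      ((delM n m (fun i₀ j => t * a i₀ j)).submatrix e id).det
        = t ^ ((k 0 + 1).factorial / ∏ i ∈ Finset.range p, (k (i + 1)).factorial)
          * ((delM n m a).submatrix e id).det :=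
  stmt_16_general p k hk n hn m hm a t
end

section
/- If $k_0 < \sum_{i=1}^p k_i$ (with $\dim V_i = k_i + 1$), then every matrix $A \in V_0 \otimes \cdots \otimes V_p$ is degenerate, i.e., viewing $A$ as a linear map $V_1^\vee \otimes \cdots \otimes V_p^\vee \to V_0$, there exist nonzero $v_i \in V_i^\vee$ with $A(v_1 \otimes \cdots \otimes v_p) = 0$. -/
open scoped BigOperators

namespace Stmt19Aux

open MvPolynomial

variable (p : ℕ) (k : ℕ → ℕ)

/-- Index type of variables: one block of `k (i+1) + 1` variables for each `i : Fin p`. -/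
abbrev σt := (i : Fin p) × Fin (k (i.val + 1) + 1)

/-- Weight of the variable `⟨i, j⟩` is the `i`-th standard basis vector. -/
noncomputable def wt : σt p k → (Fin p → ℕ) := fun x => Pi.single x.1 1

/-- Constant multidegree. -/
def cst (t : ℕ) : Fin p → ℕ := fun _ => t

lemma mdeg_apply (μ : σt p k →₀ ℕ) (i : Fin p) :
    Finsupp.weight (wt p k) μ i = ∑ j, μ ⟨i, j⟩ := by
  classical
  have h0 : Finsupp.weight (wt p k) μ = ∑ x : σt p k, μ x • wt p k x := by
    rw [Finsupp.weight_apply]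
    exact Finsupp.sum_fintype _ _ (by intro x; simp)
  rw [h0, Finset.sum_apply]
  have h1 : ∀ x : σt p k, (μ x • wt p k x) i = if i = x.1 then μ x else 0 := by
    intro x
    simp [wt, Pi.single_apply]
  rw [Finset.sum_congr rfl fun x _ => h1 x]
  rw [← Finset.univ_sigma_univ, Finset.sum_sigma]
  have h2 : ∀ x : Fin p, (∑ x1 : Fin (k (x.val + 1) + 1), if i = x then μ ⟨x, x1⟩ else 0)
      = if i = x then (∑ x1 : Fin (k (x.val + 1) + 1), μ ⟨x, x1⟩) else 0 := by
    intro x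
    split <;> simp
  rw [Finset.sum_congr rfl fun x _ => h2 x, Finset.sum_ite_eq]
  simp

/-- The multilinear polynomials associated to the tensor `a`. -/
noncomputable def F (a : Fin (k 0 + 1) → ((i : Fin p) → Fin (k (i.val + 1) + 1)) → ℂ)
    (i₀ : Fin (k 0 + 1)) : MvPolynomial (σt p k) ℂ :=
  ∑ j : (i : Fin p) → Fin (k (i.val + 1) + 1),
    C (a i₀ j) * ∏ i : Fin p, X (⟨i, j i⟩ : σt p k)

lemma sum_wt (c : (i : Fin p) → Fin (k (i.val + 1) + 1)) :
    (∑ i : Fin p, wt p k ⟨i, c i⟩) = cst p 1 := by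
  funext i
  rw [Finset.sum_apply]
  simp [wt, Pi.single_apply, cst]

lemma F_hom (a) (i₀) : (F p k a i₀).IsWeightedHomogeneous (wt p k) (cst p 1) := by
  apply IsWeightedHomogeneous.sum
  intro j _
  have h1 : IsWeightedHomogeneous (wt p k) (∏ i : Fin p, X (⟨i, j i⟩ : σt p k))
      (∑ i : Fin p, wt p k ⟨i, j i⟩) :=
    IsWeightedHomogeneous.prod _ _ _ (fun i _ => isWeightedHomogeneous_X ℂ (wt p k) _)
  rw [sum_wt] at h1
  have h2 := (isWeightedHomogeneous_C (wt p k) (a i₀ j)).mul h1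
  rwa [zero_add] at h2

/-- The exponent of the product of one variable from each block. -/
noncomputable def Ec (c : (i : Fin p) → Fin (k (i.val + 1) + 1)) : σt p k →₀ ℕ :=
  ∑ i : Fin p, Finsupp.single (⟨i, c i⟩ : σt p k) 1

lemma prod_X_eq (c : (i : Fin p) → Fin (k (i.val + 1) + 1)) :
    (∏ i : Fin p, (X (⟨i, c i⟩ : σt p k) : MvPolynomial (σt p k) ℂ))
      = monomial (Ec p k c) 1 := by
  classical
  rw [Ec]
  induction (Finset.univ : Finset (Fin p)) using Finset.induction with
  | empty => simp
  | @insert _ _ hnotmem ih =>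
    rw [Finset.prod_insert hnotmem, Finset.sum_insert hnotmem, ih, X, monomial_mul, one_mul]

lemma weight_Ec (c) : Finsupp.weight (wt p k) (Ec p k c) = cst p 1 := by
  rw [Ec, map_sum]
  have h1 : ∀ i : Fin p, Finsupp.weight (wt p k) (Finsupp.single (⟨i, c i⟩ : σt p k) 1)
      = wt p k ⟨i, c i⟩ := by
    intro i
    rw [Finsupp.weight_apply, Finsupp.sum_single_index (by simp), one_smul]
  rw [Finset.sum_congr rfl fun i _ => h1 i, sum_wt]

lemma Ec_apply (c) (i : Fin p) (j) : (Ec p k c) ⟨i, j⟩ = if j = c i then 1 else 0 := by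
  classical
  rw [Ec, Finsupp.finset_sum_apply]
  rw [Finset.sum_eq_single i (fun i' _ hne => ?_) (by simp)]
  · rw [Finsupp.single_apply]
    by_cases hj : j = c i
    · subst hj; simp
    · rw [if_neg, if_neg hj]
      intro hEq
      rw [Sigma.mk.inj_iff] at hEq
      exact hj (by rw [heq_iff_eq] at hEq; exact hEq.2.symm)
  · rw [Finsupp.single_apply, if_neg]
    intro hEq
    rw [Sigma.mk.inj_iff] at hEq
    exact hne hEq.1

variable {p k}

/-- Multiplying by a `(1,…,1)`-homogeneous polynomial shifts constant-multidegree
components by one. -/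
lemma comp_mul {f : MvPolynomial (σt p k) ℂ}
    (hf : f.IsWeightedHomogeneous (wt p k) (cst p 1))
    (h : MvPolynomial (σt p k) ℂ) (t : ℕ) :
    weightedHomogeneousComponent (wt p k) (cst p (t + 1)) (h * f)
      = weightedHomogeneousComponent (wt p k) (cst p t) h * f := by
  induction h using MvPolynomial.induction_on' with
  | add q r hq hr =>
    rw [add_mul, map_add, map_add, hq, hr, add_mul]
  | monomial u b =>
    have hadd : ∀ m : Fin p → ℕ, m + cst p 1 = cst p (t+1) ↔ m = cst p t := by
      intro m
      constructor
      · intro hEq; funext i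
        have := congrFun hEq i
        simp only [Pi.add_apply, cst] at this ⊢
        omega
      · rintro rfl; funext i; simp [cst]
    by_cases hu : Finsupp.weight (wt p k) u = cst p t
    · have h1 : IsWeightedHomogeneous (wt p k) (monomial u b) (cst p t) :=
        isWeightedHomogeneous_monomial _ _ _ hu
      have h2 : IsWeightedHomogeneous (wt p k) (monomial u b * f) (cst p (t+1)) := by
        have := h1.mul hf
        rwa [(hadd _).mpr rfl] at this
      rw [IsWeightedHomogeneous.weightedHomogeneousComponent_same h2,
        IsWeightedHomogeneous.weightedHomogeneousComponent_same h1]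
    · have h1 : IsWeightedHomogeneous (wt p k) (monomial u b) (Finsupp.weight (wt p k) u) :=
        isWeightedHomogeneous_monomial _ _ _ rfl
      have h2 : IsWeightedHomogeneous (wt p k) (monomial u b * f)
          (Finsupp.weight (wt p k) u + cst p 1) := h1.mul hf
      rw [IsWeightedHomogeneous.weightedHomogeneousComponent_ne _ h2
          (fun hEq => hu ((hadd _).mp hEq.symm)),
        IsWeightedHomogeneous.weightedHomogeneousComponent_ne _ h1
          (fun hEq => hu hEq.symm), zero_mul]

/-- Generators of the filtration: products `F^α · (monomial of multidegree (T₀,…,T₀))`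
with `∑ α = s`. -/
def Gset (a : Fin (k 0 + 1) → ((i : Fin p) → Fin (k (i.val + 1) + 1)) → ℂ) (T₀ s : ℕ) :
    Set (MvPolynomial (σt p k) ℂ) :=
  { g | ∃ α : Fin (k 0 + 1) → ℕ, (∑ i₀, α i₀) = s ∧ ∃ ν : σt p k →₀ ℕ,
      Finsupp.weight (wt p k) ν = cst p T₀ ∧
      g = (∏ i₀, F p k a i₀ ^ α i₀) * monomial ν 1 }

lemma F_mul_mem (a) (T₀ s : ℕ) (i₀ : Fin (k 0 + 1)) {x : MvPolynomial (σt p k) ℂ}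
    (hx : x ∈ Submodule.span ℂ (Gset a T₀ s)) :
    F p k a i₀ * x ∈ Submodule.span ℂ (Gset a T₀ (s + 1)) := by
  classical
  induction hx using Submodule.span_induction with
  | mem g hg =>
    obtain ⟨α, hα, ν, hν, rfl⟩ := hg
    apply Submodule.subset_span
    refine ⟨fun i => α i + (if i = i₀ then 1 else 0), ?_, ν, hν, ?_⟩
    · rw [Finset.sum_add_distrib, hα, Finset.sum_ite_eq' Finset.univ i₀ (fun _ => 1)]
      simp
    · have hprod : (∏ i, F p k a i ^ (α i + (if i = i₀ then 1 else 0)))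
          = F p k a i₀ * ∏ i, F p k a i ^ α i := by
        rw [show (∏ i, F p k a i ^ (α i + (if i = i₀ then 1 else 0)))
            = ∏ i, (F p k a i ^ α i * (if i = i₀ then F p k a i else 1)) from
          Finset.prod_congr rfl fun i _ => by rw [pow_add, pow_ite, pow_one, pow_zero],
          Finset.prod_mul_distrib, Finset.prod_ite_eq' Finset.univ i₀ (fun i => F p k a i)]
        simp [mul_comm]
      rw [hprod, mul_assoc]
  | zero => simpa using Submodule.zero_mem _
  | add y z _ _ hy hz => rw [mul_add]; exact Submodule.add_mem _ hy hz
  | smul c y _ hy => rw [mul_smul_comm]; exact Submodule.smul_mem _ _ hy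

/-- Main induction: every monomial of constant multidegree `(T₀+s, …, T₀+s)` lies in the
span of the generators `Gset a T₀ s`. -/
lemma main_induction (a) (d T₀ : ℕ) (hd1 : 1 ≤ d) (hdT : d ≤ T₀)
    (hT₀ : ∀ (μ : σt p k →₀ ℕ) (i : Fin p), T₀ ≤ (∑ j, μ ⟨i, j⟩) → ∃ j, d ≤ μ ⟨i, j⟩)
    (hdI : ∀ c : (i : Fin p) → Fin (k (i.val + 1) + 1),
      (monomial (Ec p k c) 1 : MvPolynomial (σt p k) ℂ) ^ d
        ∈ Ideal.span (Set.range (F p k a)))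
    (s : ℕ) :
    ∀ (μ : σt p k →₀ ℕ), Finsupp.weight (wt p k) μ = cst p (T₀ + s) →
    (monomial μ 1 : MvPolynomial (σt p k) ℂ) ∈ Submodule.span ℂ (Gset a T₀ s) := by
  classical
  induction s with
  | zero =>
    intro μ hμ
    apply Submodule.subset_span
    exact ⟨fun _ => 0, by simp, μ, by simpa using hμ, by simp⟩
  | succ s ih =>
    intro μ hμ
    have hμi : ∀ i : Fin p, (∑ j, μ ⟨i, j⟩) = T₀ + s + 1 := by
      intro i
      have := congrFun hμ i
      rw [mdeg_apply] at this
      simpa [cst, Nat.add_assoc] using this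
    have hc : ∀ i : Fin p, ∃ j, d ≤ μ ⟨i, j⟩ := fun i => hT₀ μ i (by rw [hμi i]; omega)
    choose c hcc using hc
    set D : σt p k →₀ ℕ := d • Ec p k c with hD
    have hDapp : ∀ (i : Fin p) (j), D ⟨i, j⟩ = if j = c i then d else 0 := by
      intro i j
      rw [hD, Finsupp.smul_apply, Ec_apply]
      split <;> simp
    have hDle : ∀ x, D x ≤ μ x := by
      rintro ⟨i, j⟩
      rw [hDapp]
      split
      · next hj => subst hj; exact hcc i
      · exact Nat.zero_le _
    set μ' : σt p k →₀ ℕ := μ - D with hμ'def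
    have hsplit : μ = D + μ' := by
      ext x
      have := hDle x
      rw [hμ'def]
      simp only [Finsupp.coe_add, Pi.add_apply, Finsupp.tsub_apply]
      omega
    have hwD : Finsupp.weight (wt p k) D = cst p d := by
      rw [hD, map_nsmul, weight_Ec]
      funext i
      simp [cst]
    have hwμ' : Finsupp.weight (wt p k) μ' = cst p (T₀ + s + 1 - d) := by
      have h1 : Finsupp.weight (wt p k) μ
          = Finsupp.weight (wt p k) D + Finsupp.weight (wt p k) μ' := by
        conv_lhs => rw [hsplit]
        rw [map_add]
      funext i
      have h2 := congrFun (hμ ▸ h1) i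
      rw [Pi.add_apply, congrFun hwD i] at h2
      simp only [cst] at h2 ⊢
      omega
    obtain ⟨hfun, hsum⟩ := Ideal.mem_span_range_iff_exists_fun.mp (hdI c)
    have hmonD : (monomial (Ec p k c) 1 : MvPolynomial (σt p k) ℂ) ^ d = monomial D 1 := by
      rw [monomial_pow, one_pow, hD]
    have hDhom : IsWeightedHomogeneous (wt p k) (monomial D 1 : MvPolynomial (σt p k) ℂ)
        (cst p d) := isWeightedHomogeneous_monomial _ _ _ hwD
    have hproj : (monomial D 1 : MvPolynomial (σt p k) ℂ)
        = ∑ i₀, weightedHomogeneousComponent (wt p k) (cst p (d - 1)) (hfun i₀)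
            * F p k a i₀ := by
      have h3 := congrArg (weightedHomogeneousComponent (wt p k) (cst p d)) hsum
      rw [map_sum, hmonD, IsWeightedHomogeneous.weightedHomogeneousComponent_same hDhom]
        at h3
      rw [← h3]
      refine Finset.sum_congr rfl fun i₀ _ => ?_
      have h4 := comp_mul (F_hom p k a i₀) (hfun i₀) (d - 1)
      rw [show d - 1 + 1 = d from by omega] at h4
      exact h4
    have key : (monomial μ 1 : MvPolynomial (σt p k) ℂ)
        = ∑ i₀, F p k a i₀
            * (weightedHomogeneousComponent (wt p k) (cst p (d - 1)) (hfun i₀)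
                * monomial μ' 1) := by
      have h5 : (monomial μ 1 : MvPolynomial (σt p k) ℂ)
          = monomial D 1 * monomial μ' 1 := by
        rw [monomial_mul, one_mul, ← hsplit]
      rw [h5, hproj, Finset.sum_mul]
      exact Finset.sum_congr rfl fun i₀ _ => by ring
    rw [key]
    apply Submodule.sum_mem
    intro i₀ _
    apply F_mul_mem
    set q : MvPolynomial (σt p k) ℂ :=
      weightedHomogeneousComponent (wt p k) (cst p (d - 1)) (hfun i₀) * monomial μ' 1
      with hqdef
    have hqh : IsWeightedHomogeneous (wt p k) q (cst p (T₀ + s)) := by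
      have h6 := (weightedHomogeneousComponent_isWeightedHomogeneous (cst p (d - 1))
        (hfun i₀)).mul (isWeightedHomogeneous_monomial (wt p k) μ' (1 : ℂ) hwμ')
      have h7 : cst p (d - 1) + cst p (T₀ + s + 1 - d) = cst p (T₀ + s) := by
        funext i; simp only [Pi.add_apply, cst]; omega
      rwa [h7] at h6
    rw [← support_sum_monomial_coeff q]
    apply Submodule.sum_mem
    intro ν hν
    have hwv : Finsupp.weight (wt p k) ν = cst p (T₀ + s) :=
      hqh (mem_support_iff.mp hν)
    have h8 : (monomial ν (coeff ν q) : MvPolynomial (σt p k) ℂ)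
        = (coeff ν q) • monomial ν 1 := by
      rw [smul_monomial, smul_eq_mul, mul_one]
    rw [h8]
    exact Submodule.smul_mem _ _ (ih ν hwv)

end Stmt19Aux

open MvPolynomial Stmt19Aux in
/-- if `k₀ < ∑_{i=1}^p kᵢ` (with `dim Vᵢ = kᵢ + 1`), then every
multidimensional matrix `A ∈ V₀ ⊗ ⋯ ⊗ V_p` is degenerate. -/
theorem stmt_19 (p : ℕ) (hp : 1 ≤ p) (k : ℕ → ℕ)
    (h : k 0 < ∑ i ∈ Finset.range p, k (i + 1))
    (a : Fin (k 0 + 1) → ((i : Fin p) → Fin (k (i.val + 1) + 1)) → ℂ) :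
    Degenerate (fun i : Fin p => k (i.val + 1) + 1) a := by
  classical
  by_contra hdeg
  -- notation
  set K : ℕ := ∑ i ∈ Finset.range p, k (i + 1) with hK
  have hKfin : K = ∑ i : Fin p, k (i.val + 1) := by
    rw [hK, Finset.sum_range fun i => k (i + 1)]
  have hkK : ∀ i : Fin p, k (i.val + 1) ≤ K := by
    intro i
    rw [hKfin]
    exact Finset.single_le_sum (f := fun i : Fin p => k (i.val + 1))
      (fun _ _ => Nat.zero_le _) (Finset.mem_univ i)
  have hK1 : 1 ≤ K := by omega
  set I : Ideal (MvPolynomial (σt p k) ℂ) := Ideal.span (Set.range (F p k a)) with hI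
  -- Nullstellensatz: each multilinear monomial is in the radical of I
  have hvan : ∀ c : (i : Fin p) → Fin (k (i.val + 1) + 1),
      (monomial (Ec p k c) 1 : MvPolynomial (σt p k) ℂ) ∈ I.radical := by
    intro c
    rw [hI, ← vanishingIdeal_zeroLocus_eq_radical (K := ℂ)]
    intro x hx
    rw [← prod_X_eq]
    set v : (i : Fin p) → (Fin (k (i.val + 1) + 1) → ℂ) :=
      fun i j => x ⟨i, j⟩ with hv
    have hFzero : ∀ i₀ : Fin (k 0 + 1),
        ∑ j : (i : Fin p) → Fin (k (i.val + 1) + 1), a i₀ j * ∏ i, v i (j i) = 0 := by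
      intro i₀
      have hmem : F p k a i₀ ∈ Ideal.span (Set.range (F p k a)) :=
        Ideal.subset_span ⟨i₀, rfl⟩
      have h30 := hx (F p k a i₀) hmem
      rw [F] at h30
      simpa [hv] using h30
    have hvz : ∃ i, v i = 0 := by
      by_contra hall
      push_neg at hall
      rw [Degenerate] at hdeg
      push_neg at hdeg
      obtain ⟨i₀, hi₀⟩ := hdeg v hall
      exact hi₀ (hFzero i₀)
    obtain ⟨i, hi⟩ := hvz
    rw [map_prod]
    apply Finset.prod_eq_zero (Finset.mem_univ i)
    rw [aeval_X]
    exact congrFun hi (c i)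
  -- choose a uniform exponent d
  have hpow : ∀ c : (i : Fin p) → Fin (k (i.val + 1) + 1),
      ∃ e : ℕ, (monomial (Ec p k c) 1 : MvPolynomial (σt p k) ℂ) ^ e ∈ I :=
    fun c => Ideal.mem_radical_iff.mp (hvan c)
  choose e he using hpow
  set d : ℕ := 1 + ∑ c, e c with hd
  have hd1 : 1 ≤ d := by omega
  have hde : ∀ c, e c ≤ d := by
    intro c
    have h31 : e c ≤ ∑ c', e c' :=
      Finset.single_le_sum (fun _ _ => Nat.zero_le _) (Finset.mem_univ c)
    omega
  have hdI : ∀ c, (monomial (Ec p k c) 1 : MvPolynomial (σt p k) ℂ) ^ d ∈ I := by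
    intro c
    have h9 : (monomial (Ec p k c) 1 : MvPolynomial (σt p k) ℂ) ^ d
        = (monomial (Ec p k c) 1) ^ (e c) * (monomial (Ec p k c) 1) ^ (d - e c) := by
      rw [← pow_add]
      congr 1
      have := hde c
      omega
    rw [h9]
    exact Ideal.mul_mem_right _ _ (he c)
  set T₀ : ℕ := (K + 1) * d + 1 with hT₀def
  have hdT : d ≤ T₀ := by
    have h40 : d ≤ (K + 1) * d := Nat.le_mul_of_pos_left d (by omega)
    omega
  have hT₀ : ∀ (μ : σt p k →₀ ℕ) (i : Fin p),
      T₀ ≤ (∑ j, μ ⟨i, j⟩) → ∃ j, d ≤ μ ⟨i, j⟩ := by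
    intro μ i hsum
    by_contra hno
    push_neg at hno
    have hble : ∀ j, μ ⟨i, j⟩ ≤ d - 1 := fun j => by have := hno j; omega
    have h32 : (∑ j, μ ⟨i, j⟩) ≤ (k (i.val + 1) + 1) * (d - 1) := by
      calc (∑ j, μ ⟨i, j⟩) ≤ ∑ _j : Fin (k (i.val + 1) + 1), (d - 1) :=
            Finset.sum_le_sum fun j _ => hble j
        _ = (k (i.val + 1) + 1) * (d - 1) := by
            rw [Finset.sum_const, Finset.card_univ, Fintype.card_fin, smul_eq_mul]
    have hb : (k (i.val + 1) + 1) * (d - 1) ≤ (K + 1) * (d - 1) :=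
      Nat.mul_le_mul_right _ (by have := hkK i; omega)
    have h33 : (K + 1) * (d - 1) < T₀ := by
      have h34 : (K + 1) * (d - 1) ≤ (K + 1) * d := Nat.mul_le_mul_left _ (by omega)
      omega
    omega
  -- counting
  set C₀ : ℕ := (T₀ + 1) ^ (Fintype.card (σt p k)) with hC₀
  set u : ℕ := K ^ (k 0) * C₀ with hu
  set s : ℕ := K * u with hs
  set t : ℕ := T₀ + s with ht
  -- the linearly independent family of monomials
  set er : ((i : Fin p) → (Fin (k (i.val + 1)) → Fin (u + 1))) → (σt p k →₀ ℕ) :=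
    fun r => Finsupp.equivFunOnFinite.symm
      (fun x : σt p k => if hlt : x.2.val < k (x.1.val + 1)
        then (r x.1 ⟨x.2.val, hlt⟩ : ℕ) else t - ∑ j', (r x.1 j' : ℕ)) with her
  have her_apply : ∀ (r : (i : Fin p) → Fin (k (i.val + 1)) → Fin (u + 1)) (x : σt p k), er r x
      = if hlt : x.2.val < k (x.1.val + 1)
        then (r x.1 ⟨x.2.val, hlt⟩ : ℕ) else t - ∑ j', (r x.1 j' : ℕ) := by
    intro r x
    rw [her]
    simp [Finsupp.equivFunOnFinite]
  have hrsum : ∀ (r : (i : Fin p) → Fin (k (i.val + 1)) → Fin (u + 1)) (i : Fin p),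
      (∑ j', (r i j' : ℕ)) ≤ s := by
    intro r i
    calc (∑ j', (r i j' : ℕ)) ≤ ∑ _j' : Fin (k (i.val + 1)), u :=
          Finset.sum_le_sum fun j' _ => Nat.lt_succ_iff.mp (r i j').isLt
      _ = k (i.val + 1) * u := by
          rw [Finset.sum_const, Finset.card_univ, Fintype.card_fin, smul_eq_mul]
      _ ≤ K * u := Nat.mul_le_mul_right _ (hkK i)
      _ = s := hs.symm
  have her_wt : ∀ r : (i : Fin p) → Fin (k (i.val + 1)) → Fin (u + 1),
      Finsupp.weight (wt p k) (er r) = cst p t := by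
    intro r
    funext i
    rw [mdeg_apply]
    have hsplitlast : (∑ j : Fin (k (i.val + 1) + 1), er r ⟨i, j⟩)
        = (∑ j : Fin (k (i.val + 1)), er r ⟨i, j.castSucc⟩) + er r ⟨i, Fin.last _⟩ :=
      Fin.sum_univ_castSucc _
    have h10 : ∀ j : Fin (k (i.val + 1)), er r ⟨i, j.castSucc⟩ = (r i j : ℕ) := by
      intro j
      rw [her_apply, dif_pos (by simpa using j.isLt)]
      congr 1
    have h11 : er r ⟨i, Fin.last _⟩ = t - ∑ j', (r i j' : ℕ) := by
      rw [her_apply, dif_neg (by simp)]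
    rw [hsplitlast, Finset.sum_congr rfl fun j _ => h10 j, h11]
    have h12 := hrsum r i
    have h13 : s ≤ t := by omega
    simp only [cst]
    omega
  have her_inj : Function.Injective er := by
    intro r r' hEq
    funext i j
    have h14 : er r ⟨i, j.castSucc⟩ = er r' ⟨i, j.castSucc⟩ := by rw [hEq]
    rw [her_apply, her_apply, dif_pos (by simpa using j.isLt),
      dif_pos (by simpa using j.isLt)] at h14
    exact Fin.ext (by simpa using h14)
  -- the spanning family
  set g : ((Fin (k 0) → Fin (s + 1)) × (σt p k → Fin (T₀ + 1)))
      → MvPolynomial (σt p k) ℂ := fun z =>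
    (∏ i₀ : Fin (k 0 + 1), F p k a i₀
        ^ (if hlt : i₀.val < k 0 then (z.1 ⟨i₀.val, hlt⟩ : ℕ) else s - ∑ j', (z.1 j' : ℕ)))
      * monomial (Finsupp.equivFunOnFinite.symm fun x : σt p k => (z.2 x : ℕ)) 1 with hg
  have hGsub : Gset a T₀ s ⊆ Set.range g := by
    rintro y ⟨α, hα, ν, hν, rfl⟩
    have hαle : ∀ i₀, α i₀ ≤ s := by
      intro i₀
      rw [← hα]
      exact Finset.single_le_sum (fun _ _ => Nat.zero_le _) (Finset.mem_univ i₀)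
    have hνle : ∀ x : σt p k, ν x ≤ T₀ := by
      rintro ⟨i, j⟩
      have h15 := congrFun hν i
      rw [mdeg_apply] at h15
      have h16 : ν ⟨i, j⟩ ≤ ∑ j', ν ⟨i, j'⟩ :=
        Finset.single_le_sum (f := fun j' : Fin (k (i.val + 1) + 1) => ν ⟨i, j'⟩)
          (fun _ _ => Nat.zero_le _) (Finset.mem_univ j)
      simp only [cst] at h15
      omega
    refine ⟨⟨fun j => ⟨α j.castSucc, by have := hαle j.castSucc; omega⟩,
      fun x => ⟨ν x, by have := hνle x; omega⟩⟩, ?_⟩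
    rw [hg]
    beta_reduce
    congr 1
    · apply Finset.prod_congr rfl
      intro i₀ _
      congr 1
      by_cases hlt : i₀.val < k 0
      · rw [dif_pos hlt]
        exact congrArg α (Fin.ext rfl)
      · rw [dif_neg hlt]
        have hlast : i₀ = Fin.last (k 0) := Fin.ext (by have := i₀.isLt; simp; omega)
        have h17 : (∑ j' : Fin (k 0), α j'.castSucc) + α (Fin.last (k 0)) = s := by
          rw [← Fin.sum_univ_castSucc fun j => α j]
          exact hα
        subst hlast
        show s - (∑ j' : Fin (k 0), α j'.castSucc) = α (Fin.last (k 0))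
        omega
    · congr 1
      exact congrArg _ (Finsupp.equivFunOnFinite_symm_coe ν)
  -- dimension bound
  set U : Submodule ℂ (MvPolynomial (σt p k) ℂ) := Submodule.span ℂ (Set.range g) with hU
  have hfd : FiniteDimensional ℂ U :=
    FiniteDimensional.span_of_finite ℂ (Set.finite_range g)
  have hmemU : ∀ r : (i : Fin p) → Fin (k (i.val + 1)) → Fin (u + 1),
      (monomial (er r) 1 : MvPolynomial (σt p k) ℂ) ∈ U := by
    intro r
    have h18 : (monomial (er r) 1 : MvPolynomial (σt p k) ℂ)
        ∈ Submodule.span ℂ (Gset a T₀ s) :=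
      main_induction a d T₀ hd1 hdT hT₀ hdI s (er r) (by rw [her_wt r])
    exact (Submodule.span_mono hGsub) h18
  have hli : LinearIndependent ℂ
      (fun r : (i : Fin p) → (Fin (k (i.val + 1)) → Fin (u + 1)) =>
        (monomial (er r) 1 : MvPolynomial (σt p k) ℂ)) := by
    have hb := (MvPolynomial.basisMonomials (σt p k) ℂ).linearIndependent
    have h19 := hb.comp er her_inj
    have h20 : ((MvPolynomial.basisMonomials (σt p k) ℂ) ∘ er)
        = fun r => (monomial (er r) 1 : MvPolynomial (σt p k) ℂ) := by
      funext r
      rw [Function.comp_apply]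
      exact congrFun (MvPolynomial.coe_basisMonomials (σt p k) ℂ) (er r)
    rwa [h20] at h19
  have hliU : LinearIndependent ℂ
      (fun r : (i : Fin p) → (Fin (k (i.val + 1)) → Fin (u + 1)) =>
        (⟨monomial (er r) 1, hmemU r⟩ : U)) := by
    apply LinearIndependent.of_comp U.subtype
    exact hli
  have hcard : Fintype.card ((i : Fin p) → (Fin (k (i.val + 1)) → Fin (u + 1)))
      ≤ Fintype.card ((Fin (k 0) → Fin (s + 1)) × (σt p k → Fin (T₀ + 1))) := by
    have h21 : Fintype.card ((i : Fin p) → (Fin (k (i.val + 1)) → Fin (u + 1)))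
        ≤ Module.finrank ℂ U := hliU.fintype_card_le_finrank
    have h22 : Module.finrank ℂ U
        ≤ Fintype.card ((Fin (k 0) → Fin (s + 1)) × (σt p k → Fin (T₀ + 1))) := by
      rw [hU]
      exact finrank_range_le_card g
    omega
  have hcard₀ : Fintype.card ((i : Fin p) → (Fin (k (i.val + 1)) → Fin (u + 1)))
      = (u + 1) ^ K := by
    rw [Fintype.card_pi]
    have h23 : ∀ i : Fin p, Fintype.card (Fin (k (i.val + 1)) → Fin (u + 1))
        = (u + 1) ^ (k (i.val + 1)) := by
      intro i
      rw [Fintype.card_fun, Fintype.card_fin, Fintype.card_fin]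
    rw [Finset.prod_congr rfl fun i _ => h23 i, Finset.prod_pow_eq_pow_sum, hKfin]
  have hcard₁ : Fintype.card ((Fin (k 0) → Fin (s + 1)) × (σt p k → Fin (T₀ + 1)))
      = (s + 1) ^ (k 0) * C₀ := by
    rw [Fintype.card_prod, Fintype.card_fun, Fintype.card_fun, Fintype.card_fin,
      Fintype.card_fin, Fintype.card_fin, hC₀]
  rw [hcard₀, hcard₁] at hcard
  -- final arithmetic contradiction
  have h24 : s + 1 ≤ K * (u + 1) := by
    rw [hs]
    nlinarith [hK1]
  have h25 : (s + 1) ^ (k 0) ≤ K ^ (k 0) * (u + 1) ^ (k 0) := by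
    calc (s + 1) ^ (k 0) ≤ (K * (u + 1)) ^ (k 0) := Nat.pow_le_pow_left h24 _
      _ = K ^ (k 0) * (u + 1) ^ (k 0) := mul_pow _ _ _
  have h26 : (u + 1) ^ (k 0 + 1) ≤ (u + 1) ^ K :=
    Nat.pow_le_pow_right (by omega) (by omega)
  have h27 : (u + 1) ^ (k 0 + 1) ≤ u * (u + 1) ^ (k 0) := by
    calc (u + 1) ^ (k 0 + 1) ≤ (u + 1) ^ K := h26
      _ ≤ (s + 1) ^ (k 0) * C₀ := hcard
      _ ≤ (K ^ (k 0) * (u + 1) ^ (k 0)) * C₀ := Nat.mul_le_mul_right _ h25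
      _ = (K ^ (k 0) * C₀) * (u + 1) ^ (k 0) := by ring
      _ = u * (u + 1) ^ (k 0) := by rw [hu]
  have h28 : (u + 1) ^ (k 0 + 1) = (u + 1) * (u + 1) ^ (k 0) := by
    rw [pow_succ]
    ring
  have h29 : 0 < (u + 1) ^ (k 0) := Nat.pow_pos (by omega)
  rw [h28] at h27
  have : u + 1 ≤ u := Nat.le_of_mul_le_mul_right h27 h29
  omega
end
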